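/- arXiv:1707.02887 — 2 statements merged into one kernel-verified Lean document; each statement's English description precedes it below -/
import Mathlib

section
/- Let θ > 0, β = ⌊1/θ⌋ and α = 1/θ − β, and let N(f) denote, for f ∈ ℝ, the number of integers k with |f − kθ| ≤ 1/2. Then ∫_{−θ/2}^{θ/2} N(f)² df = θ·(β² + 2αβ + α). -/
/-!
The integers `k` with `|f - kθ| ≤ 1/2` form the interval `[⌈(f - 1/2)/θ⌉, ⌊(f + 1/2)/θ⌋]`, and
`N` is `θ`-periodic, so the integral may be taken over the window `[-1/2, θ - 1/2]` instead.
On that window `⌊(f + 1/2)/θ⌋ = 0`, and since `1/θ = β + α` the lower end is `-β` on the first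
stretch of length `αθ` and `1 - β` on the remaining `(1 - α)θ`. So `N = β + 1`, then `N = β`, and
the integral is `αθ(β + 1)² + (1 - α)θβ² = θ(β² + 2αβ + α)`.
-/

open MeasureTheory Set Function

theorem setOf_abs_sub_mul_le_eq_Icc {θ : ℝ} (hθ : 0 < θ) (f r : ℝ) :
    {k : ℤ | |f - k * θ| ≤ r} = Icc ⌈(f - r) / θ⌉ ⌊(f + r) / θ⌋ := by
  ext k
  simp only [mem_ofPred_eq, mem_Icc, abs_le, Int.ceil_le, Int.le_floor, div_le_iff₀ hθ,
    le_div_iff₀ hθ]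
  constructor <;> rintro ⟨h₁, h₂⟩ <;> constructor <;> linarith

theorem natCard_setOf_abs_sub_mul_le {θ : ℝ} (hθ : 0 < θ) (f r : ℝ) :
    Nat.card {k : ℤ | |f - k * θ| ≤ r} = (⌊(f + r) / θ⌋ + 1 - ⌈(f - r) / θ⌉).toNat := by
  rw [setOf_abs_sub_mul_le_eq_Icc hθ, ← Finset.coe_Icc, Nat.card_coe_set_eq, ncard_coe_finset,
    Int.card_Icc]

theorem natCard_setOf_abs_add_sub_mul_le (θ r f : ℝ) :
    Nat.card {k : ℤ | |f + θ - k * θ| ≤ r} = Nat.card {k : ℤ | |f - k * θ| ≤ r} :=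
  Nat.card_congr <| Equiv.subtypeEquiv (Equiv.subRight 1) fun k ↦ by
    simp only [mem_ofPred_eq, Equiv.subRight_apply, Int.cast_sub, Int.cast_one]
    ring_nf

section window

variable {θ w f : ℝ}

theorem natCard_setOf_abs_sub_mul_le_half_of_mem_Ico (hθ : 0 < θ) (hw : 0 ≤ w)
    (hf₀ : 0 ≤ f + w / 2) (hf : f + w / 2 < θ) :
    (Nat.card {k : ℤ | |f - k * θ| ≤ w / 2} : ℤ) =
      ⌊w / θ⌋ + 1 - ⌈(f + w / 2) / θ - Int.fract (w / θ)⌉ := by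
  have hfloor : ⌊(f + w / 2) / θ⌋ = 0 :=
    Int.floor_eq_zero_iff.2 ⟨div_nonneg hf₀ hθ.le, (div_lt_one hθ).2 hf⟩
  have hceil : ⌈(f - w / 2) / θ⌉ = ⌈(f + w / 2) / θ - Int.fract (w / θ)⌉ - ⌊w / θ⌋ := by
    rw [← Int.ceil_sub_intCast, sub_sub, Int.fract_add_floor]
    ring_nf
  have hceil_le : ⌈(f + w / 2) / θ - Int.fract (w / θ)⌉ ≤ 1 :=
    Int.ceil_le.2 (by push_cast; linarith [(div_lt_one hθ).2 hf, Int.fract_nonneg (w / θ)])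
  have hfloor_nonneg : 0 ≤ ⌊w / θ⌋ := Int.floor_nonneg.2 (by positivity)
  rw [natCard_setOf_abs_sub_mul_le hθ, hfloor, hceil]
  omega

theorem natCard_setOf_abs_sub_mul_le_half_of_lt_fract (hθ : 0 < θ) (hw : 0 ≤ w)
    (hf₀ : 0 < f + w / 2) (hf : f + w / 2 < Int.fract (w / θ) * θ) :
    (Nat.card {k : ℤ | |f - k * θ| ≤ w / 2} : ℤ) = ⌊w / θ⌋ + 1 := by
  have hlt : f + w / 2 < θ := hf.trans (mul_lt_of_lt_one_left hθ (Int.fract_lt_one _))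
  rw [natCard_setOf_abs_sub_mul_le_half_of_mem_Ico hθ hw hf₀.le hlt,
    Int.ceil_eq_zero_iff.2 ⟨?_, ?_⟩, sub_zero]
  · linarith [div_pos hf₀ hθ, Int.fract_lt_one (w / θ)]
  · linarith [(div_lt_iff₀ hθ).2 hf]

theorem natCard_setOf_abs_sub_mul_le_half_of_fract_lt (hθ : 0 < θ) (hw : 0 ≤ w)
    (hf₀ : Int.fract (w / θ) * θ < f + w / 2) (hf : f + w / 2 < θ) :
    (Nat.card {k : ℤ | |f - k * θ| ≤ w / 2} : ℤ) = ⌊w / θ⌋ := by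
  have hnonneg : 0 ≤ f + w / 2 := (mul_nonneg (Int.fract_nonneg _) hθ.le).trans hf₀.le
  rw [natCard_setOf_abs_sub_mul_le_half_of_mem_Ico hθ hw hnonneg hf,
    (Int.ceil_eq_iff (z := 1)).2 ⟨?_, ?_⟩]
  · ring
  · push_cast; linarith [(lt_div_iff₀ hθ).2 hf₀]
  · push_cast; linarith [(div_lt_one hθ).2 hf, Int.fract_nonneg (w / θ)]

end window

theorem intervalIntegral_eq_of_eqOn_Ioo {g : ℝ → ℝ} {a b c u v : ℝ} (hab : a ≤ b) (hbc : b ≤ c)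
    (hu : EqOn g (fun _ ↦ u) (Ioo a b)) (hv : EqOn g (fun _ ↦ v) (Ioo b c)) :
    ∫ x in a..c, g x = (b - a) * u + (c - b) * v := by
  have integrable {d e w : ℝ} (hde : d ≤ e) (h : EqOn g (fun _ ↦ w) (Ioo d e)) :
      IntervalIntegrable g volume d e :=
    intervalIntegrable_const.congr_uIoo (uIoo_of_le hde ▸ h.symm)
  rw [← intervalIntegral.integral_add_adjacent_intervals (integrable hab hu) (integrable hbc hv),
    intervalIntegral.integral_congr_Ioo_of_le hab hu,
    intervalIntegral.integral_congr_Ioo_of_le hbc hv]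
  simp

/-- Second moment of the fold-count function: with `θ > 0`, `β = ⌊1/θ⌋`, `α = 1/θ − β`, and
`N f` the number of integers `k` with `|f − kθ| ≤ 1/2`, we have
`∫_{−θ/2}^{θ/2} N(f)² df = θ·(β² + 2αβ + α)`. -/
theorem fold_count_second_moment (θ : ℝ) (hθ : 0 < θ) (β : ℤ) (hβ : β = ⌊1 / θ⌋)
    (α : ℝ) (hα : α = 1 / θ - β) (N : ℝ → ℕ)
    (hN : ∀ f : ℝ, N f = Nat.card {k : ℤ | |f - k * θ| ≤ 1 / 2}) :
    (∫ f in (-θ / 2)..(θ / 2), ((N f : ℝ)) ^ 2) =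
      θ * ((β : ℝ) ^ 2 + 2 * α * β + α) := by
  subst hβ hα
  rw [Int.self_sub_floor]
  have hper : Periodic (fun f ↦ (N f : ℝ) ^ 2) θ := fun f ↦ by
    simp only [hN, natCard_setOf_abs_add_sub_mul_le]
  have hlong : EqOn (fun f ↦ (N f : ℝ) ^ 2) (fun _ ↦ ((⌊1 / θ⌋ : ℝ) + 1) ^ 2)
      (Ioo (-1 / 2) (Int.fract (1 / θ) * θ - 1 / 2)) := fun f ⟨hf₀, hf⟩ ↦ by
    have := natCard_setOf_abs_sub_mul_le_half_of_lt_fract (f := f) hθ zero_le_one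
      (by linarith) (by linarith)
    simp only [hN, ← Int.cast_natCast (R := ℝ), this, Int.cast_add, Int.cast_one]
  have hshort : EqOn (fun f ↦ (N f : ℝ) ^ 2) (fun _ ↦ (⌊1 / θ⌋ : ℝ) ^ 2)
      (Ioo (Int.fract (1 / θ) * θ - 1 / 2) (-1 / 2 + θ)) := fun f ⟨hf₀, hf⟩ ↦ by
    have := natCard_setOf_abs_sub_mul_le_half_of_fract_lt (f := f) hθ zero_le_one
      (by linarith) (by linarith)
    simp only [hN, ← Int.cast_natCast (R := ℝ), this]
  have hfract₀ := Int.fract_nonneg (1 / θ)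
  have hfract₁ := Int.fract_lt_one (1 / θ)
  rw [show θ / 2 = -θ / 2 + θ by ring, hper.intervalIntegral_add_eq (-θ / 2) (-1 / 2),
    intervalIntegral_eq_of_eqOn_Ioo (by nlinarith) (by nlinarith) hlong hshort]
  ring
end

section
/- Let (Ω, μ) be a measure space with μ(Ω) < ∞, and let h : Ω → ℝ be measurable with 0 ≤ h(ω) ≤ M for all ω and some constant M > 0. Then lim_{x→∞} ( ∫_Ω log(1 + x·h(ω)) dμ(ω) ) / log(x) = μ({ ω : h(ω) > 0 }). -/
open MeasureTheory Real Filter Topology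

/-!
Pointwise, `log (1 + x t) / log x → 1` when `t > 0` (since `log (1 + x t) = log x + log (t + 1/x)`)
and it is identically `0` when `t = 0`; so the integrand tends to the indicator of the support of
`h`. For `x ≥ 1 + M` we have `1 + x t ≤ x²`, so the integrand is bounded by `2`, which is
integrable because `μ` is finite, and dominated convergence gives the limit `μ {h > 0}`.
-/

lemma log_one_add_mul_le_two_mul_log {t M x : ℝ} (ht : 0 ≤ t) (htM : t ≤ M) (hx : 1 + M ≤ x) :
    log (1 + x * t) ≤ 2 * log x := by
  have hx1 : 1 ≤ x := by linarith
  calc log (1 + x * t) ≤ log (x * x) := log_le_log (by positivity) (by nlinarith)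
    _ = 2 * log x := by rw [log_mul (by positivity) (by positivity)]; ring

lemma abs_log_one_add_mul_div_log_le_two {t M x : ℝ} (ht : 0 ≤ t) (htM : t ≤ M)
    (hx : 1 + M ≤ x) : |log (1 + x * t) / log x| ≤ 2 := by
  have hlogx : 0 ≤ log x := log_nonneg (by linarith)
  have hnum : 0 ≤ log (1 + x * t) := log_nonneg (by nlinarith)
  rw [abs_of_nonneg (div_nonneg hnum hlogx)]
  rcases hlogx.eq_or_lt with hzero | hpos
  · simp [← hzero]
  · exact (div_le_iff₀ hpos).2 (log_one_add_mul_le_two_mul_log ht htM hx)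

lemma tendsto_log_one_add_mul_div_log_of_pos {t : ℝ} (ht : 0 < t) :
    Tendsto (fun x => log (1 + x * t) / log x) atTop (𝓝 1) := by
  have hsplit : ∀ᶠ x : ℝ in atTop, 1 + log (x⁻¹ + t) / log x = log (1 + x * t) / log x := by
    filter_upwards [eventually_gt_atTop 1] with x hx
    have hx0 : 0 < x := by linarith
    rw [show 1 + x * t = x * (x⁻¹ + t) by field_simp, log_mul hx0.ne' (by positivity), add_div,
      div_self (log_pos hx).ne']
  have hlog : Tendsto (fun x : ℝ => log (x⁻¹ + t)) atTop (𝓝 (log t)) := by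
    simpa using (tendsto_inv_atTop_zero.add_const t).log (by simpa using ht.ne')
  simpa using ((hlog.div_atTop tendsto_log_atTop).const_add 1).congr' hsplit

lemma tendsto_log_one_add_mul_div_log {t : ℝ} (ht : 0 ≤ t) :
    Tendsto (fun x => log (1 + x * t) / log x) atTop (𝓝 (if 0 < t then 1 else 0)) := by
  rcases ht.eq_or_lt with rfl | hpos
  · simp
  · simpa [hpos] using tendsto_log_one_add_mul_div_log_of_pos hpos

theorem prelog_principle_general {Ω : Type*} [MeasurableSpace Ω] (μ : Measure Ω)
    [IsFiniteMeasure μ] (h : Ω → ℝ) (hmeas : Measurable h) (M : ℝ)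
    (hbound : ∀ ω : Ω, 0 ≤ h ω ∧ h ω ≤ M) :
    Filter.Tendsto
      (fun x : ℝ => (∫ ω, Real.log (1 + x * h ω) ∂μ) / Real.log x)
      atTop (nhds ((μ {ω : Ω | 0 < h ω}).toReal)) := by
  have hS : MeasurableSet {ω : Ω | 0 < h ω} := measurableSet_lt measurable_const hmeas
  have hlim : Tendsto (fun x : ℝ => ∫ ω, log (1 + x * h ω) / log x ∂μ) atTop
      (𝓝 (∫ ω, {ω : Ω | 0 < h ω}.indicator 1 ω ∂μ)) := by
    refine tendsto_integral_filter_of_dominated_convergence (fun _ => 2) ?_ ?_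
      (integrable_const 2) ?_
    · exact Eventually.of_forall fun x =>
        (((measurable_const.mul hmeas).const_add 1).log.div_const _).aestronglyMeasurable
    · filter_upwards [eventually_ge_atTop (1 + M)] with x hx
      exact ae_of_all _ fun ω =>
        abs_log_one_add_mul_div_log_le_two (hbound ω).1 (hbound ω).2 hx
    · exact ae_of_all _ fun ω => tendsto_log_one_add_mul_div_log (hbound ω).1
  rw [integral_indicator_one hS] at hlim
  simpa only [integral_div, measureReal_def] using hlim

/-- General pre-log principle: on a finite measure space, for a bounded measurable
`h ≥ 0`, the ratio `(∫ log(1 + x·h) dμ) / log x` tends, as `x → ∞`, to the measure of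
the support `{ω : h ω > 0}`. -/
theorem prelog_principle {Ω : Type*} [MeasurableSpace Ω] (μ : Measure Ω)
    [IsFiniteMeasure μ] (h : Ω → ℝ) (hmeas : Measurable h) (M : ℝ) (hM : 0 < M)
    (hbound : ∀ ω : Ω, 0 ≤ h ω ∧ h ω ≤ M) :
    Filter.Tendsto
      (fun x : ℝ => (∫ ω, Real.log (1 + x * h ω) ∂μ) / Real.log x)
      atTop (nhds ((μ {ω : Ω | 0 < h ω}).toReal)) :=
  prelog_principle_general μ h hmeas M hbound
end
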